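/- arXiv:1609.06408 — 7 statements merged into one kernel-verified Lean document; each statement's English description precedes it below -/
import Mathlib

section
/- Let h: ℝⁿ → ℝ be continuously differentiable and let x(t) solve ẋ = f(x) (f locally Lipschitz). Suppose B(x) = −log(h(x)/(1+h(x))) satisfies dB/dt ≤ γ/B along the solution for some γ > 0. If h(x(t₀)) > 0, then for all t ≥ t₀ in the interval of existence, h(x(t)) ≥ 1 / (−1 + exp(√(2γ(t−t₀) + (log((h(x₀)+1)/h(x₀)))²))), and in particular h(x(t)) > 0. -/
/-!
Along the solution, the barrier `B = log ((h + 1) / h)` is dominated by the solution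
`√(2γ(t - t₀) + B(t₀)²)` of the comparison equation `Ḃ = γ / B`, and inverting `h ↦ B` turns
this upper bound on `B` into the lower bound on `h`. Since that bound is uniform on `[t₀, T]`,
`h` never takes values in `(0, L)` for some `L > 0`, so by continuity it cannot reach `0`.
-/

open Real Set

theorem hasDerivAt_sqrt_two_mul_sub_add {γ a c t : ℝ} (h : 0 < 2 * γ * (t - a) + c) :
    HasDerivAt (fun u => √(2 * γ * (u - a) + c)) (γ / √(2 * γ * (t - a) + c)) t := by
  have hlin : HasDerivAt (fun u => 2 * γ * (u - a) + c) (2 * γ) t := by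
    simpa using (((hasDerivAt_id t).sub_const a).const_mul (2 * γ)).add_const c
  convert hlin.sqrt h.ne' using 1
  rw [mul_div_mul_left _ _ two_ne_zero]

theorem le_sqrt_of_hasDerivWithinAt_le_div {B B' : ℝ → ℝ} {a b γ : ℝ} (hγ : 0 ≤ γ)
    (ha : 0 < B a) (hc : ContinuousOn B (Icc a b))
    (hB : ∀ t ∈ Ico a b, HasDerivWithinAt B (B' t) (Ici t) t)
    (hB' : ∀ t ∈ Ico a b, B' t ≤ γ / B t) :
    ∀ t ∈ Icc a b, B t ≤ √(2 * γ * (t - a) + B a ^ 2) := by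
  have hpos : ∀ u, a ≤ u → 0 < 2 * γ * (u - a) + B a ^ 2 := fun u hu => by
    have := mul_nonneg (mul_nonneg zero_le_two hγ) (sub_nonneg.2 hu)
    positivity
  have hφ : ∀ ε, ∀ u, a ≤ u →
      HasDerivAt (fun u => √(2 * γ * (u - a) + B a ^ 2) + ε * (u - a + 1))
      (γ / √(2 * γ * (u - a) + B a ^ 2) + ε) u := fun ε u hu => by
    have hlin : HasDerivAt (fun u => ε * (u - a + 1)) ε u := by
      simpa using (((hasDerivAt_id u).sub_const a).add_const 1).const_mul ε
    exact (hasDerivAt_sqrt_two_mul_sub_add (hpos u hu)).add hlin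
  -- The strict fencing theorem needs a strict inequality at contact points, hence the slack `ε`.
  have hslack : ∀ ε > 0, ∀ t ∈ Icc a b,
      B t ≤ √(2 * γ * (t - a) + B a ^ 2) + ε * (t - a + 1) := by
    intro ε hε
    refine image_le_of_deriv_right_lt_deriv_boundary' hc hB ?_
      (fun u hu => (hφ ε u hu.1).continuousAt.continuousWithinAt)
      (fun u hu => (hφ ε u hu.1).hasDerivWithinAt) ?_
    · simp [Real.sqrt_sq ha.le, hε.le]
    · intro u hu hcontact
      have hsqrt : 0 < √(2 * γ * (u - a) + B a ^ 2) := sqrt_pos.2 (hpos u hu.1)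
      have hle : √(2 * γ * (u - a) + B a ^ 2) ≤ B u := by
        rw [hcontact]
        nlinarith [hu.1]
      calc B' u ≤ γ / B u := hB' u hu
        _ ≤ γ / √(2 * γ * (u - a) + B a ^ 2) := div_le_div_of_nonneg_left hγ hsqrt hle
        _ < γ / √(2 * γ * (u - a) + B a ^ 2) + ε := lt_add_of_pos_right _ hε
  intro t ht
  refine le_of_forall_pos_le_add fun ε hε => ?_
  have hd : 0 < t - a + 1 := by linarith [ht.1]
  simpa [div_mul_cancel₀ _ hd.ne'] using hslack (ε / (t - a + 1)) (div_pos hε hd) t ht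

theorem neg_log_div_one_add_eq (y : ℝ) :
    -log (y / (1 + y)) = log ((y + 1) / y) := by
  rw [← log_inv, inv_div, add_comm]

theorem log_add_one_div_pos {y : ℝ} (hy : 0 < y) : 0 < log ((y + 1) / y) :=
  log_pos <| (lt_div_iff₀ hy).2 (by linarith)

theorem one_div_neg_one_add_exp_le {y S : ℝ} (hy : 0 < y) (hS : log ((y + 1) / y) ≤ S) :
    1 / (-1 + exp S) ≤ y := by
  have hexp : (y + 1) / y ≤ exp S := (log_le_iff_le_exp (by positivity)).1 hS
  rw [add_div, div_self hy.ne'] at hexp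
  have hinv : 0 < 1 / y := by positivity
  rw [one_div_le (by linarith) hy]
  linarith

theorem ContinuousOn.pos_of_forall_pos_imp_le {g : ℝ → ℝ} {a b L : ℝ}
    (hg : ContinuousOn g (Icc a b)) (hL : 0 < L) (hgap : ∀ s ∈ Icc a b, 0 < g s → L ≤ g s)
    (ha : 0 < g a) : ∀ t ∈ Icc a b, 0 < g t := by
  intro t ht
  by_contra! hle
  have hv : 0 < min (L / 2) (g a) := lt_min (half_pos hL) ha
  obtain ⟨s, hs, hgs⟩ := intermediate_value_Icc' ht.1 (hg.mono (Icc_subset_Icc_right ht.2))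
    ⟨hle.trans hv.le, min_le_right _ _⟩
  have := hgap s ⟨hs.1, hs.2.trans ht.2⟩ (hgs ▸ hv)
  linarith [hgs ▸ min_le_left (L / 2) (g a)]

theorem stmt8_general (n : ℕ) (f : (Fin n → ℝ) → (Fin n → ℝ))
    (h : (Fin n → ℝ) → ℝ) (hh : ContDiff ℝ 1 h)
    (t₀ T γ : ℝ) (hγ : 0 < γ) (x : ℝ → Fin n → ℝ)
    (hx : ∀ t ∈ Set.Icc t₀ T, HasDerivAt x (f (x t)) t)
    (h0 : 0 < h (x t₀))
    (hB : ∀ t ∈ Set.Icc t₀ T, ∃ d : ℝ,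
      HasDerivAt (fun s => -Real.log (h (x s) / (1 + h (x s)))) d t ∧
      d ≤ γ / (-Real.log (h (x t) / (1 + h (x t))))) :
    ∀ t ∈ Set.Icc t₀ T,
      h (x t) ≥ 1 / (-1 + Real.exp (Real.sqrt (2 * γ * (t - t₀) +
        (Real.log ((h (x t₀) + 1) / h (x t₀))) ^ 2))) ∧ 0 < h (x t) := by
  intro t ht
  choose! d hd hdle using hB
  set B₀ := log ((h (x t₀) + 1) / h (x t₀))
  set S : ℝ → ℝ := fun s => √(2 * γ * (s - t₀) + B₀ ^ 2)
  have hB₀ : 0 < B₀ := log_add_one_div_pos h0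
  have hcomp : ∀ s ∈ Icc t₀ T, -log (h (x s) / (1 + h (x s))) ≤ S s := by
    simpa only [neg_log_div_one_add_eq (h (x _))] using
      le_sqrt_of_hasDerivWithinAt_le_div hγ.le (by rwa [neg_log_div_one_add_eq (h (x _))])
      (fun s hs => (hd s hs).continuousAt.continuousWithinAt)
      (fun s hs => (hd s (Ico_subset_Icc_self hs)).hasDerivWithinAt)
      (fun s hs => hdle s (Ico_subset_Icc_self hs))
  have hbound : ∀ s ∈ Icc t₀ T, ∀ r ≥ S s, 0 < h (x s) → 1 / (-1 + exp r) ≤ h (x s) :=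
    fun s hs r hr hpos => one_div_neg_one_add_exp_le hpos
      (by linarith [neg_log_div_one_add_eq (h (x s)), hcomp s hs])
  have hST : 0 < S T := sqrt_pos.2 (by nlinarith [ht.1.trans ht.2])
  have hpos := ContinuousOn.pos_of_forall_pos_imp_le
    (fun s hs => (hh.continuous.continuousAt.comp (hx s hs).continuousAt).continuousWithinAt)
    (one_div_pos.2 (by linarith [add_one_lt_exp hST.ne']))
    (fun s hs => hbound s hs (S T) (sqrt_le_sqrt (by nlinarith [hs.2]))) h0
  exact ⟨hbound t ht (S t) le_rfl (hpos t ht), hpos t ht⟩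

/-- Logarithmic barrier B = −log(h/(1+h)) with Ḃ ≤ γ/B yields an explicit positive
lower bound on h along the solution. -/
theorem stmt8 (n : ℕ) (f : (Fin n → ℝ) → (Fin n → ℝ)) (hf : LocallyLipschitz f)
    (h : (Fin n → ℝ) → ℝ) (hh : ContDiff ℝ 1 h)
    (t₀ T γ : ℝ) (hγ : 0 < γ) (x : ℝ → Fin n → ℝ)
    (hx : ∀ t ∈ Set.Icc t₀ T, HasDerivAt x (f (x t)) t)
    (h0 : 0 < h (x t₀))
    (hB : ∀ t ∈ Set.Icc t₀ T, ∃ d : ℝ,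
      HasDerivAt (fun s => -Real.log (h (x s) / (1 + h (x s)))) d t ∧
      d ≤ γ / (-Real.log (h (x t) / (1 + h (x t))))) :
    ∀ t ∈ Set.Icc t₀ T,
      h (x t) ≥ 1 / (-1 + Real.exp (Real.sqrt (2 * γ * (t - t₀) +
        (Real.log ((h (x t₀) + 1) / h (x t₀))) ^ 2))) ∧ 0 < h (x t) :=
  stmt8_general n f h hh t₀ T γ hγ x hx h0 hB
end

section
/- Let h: ℝⁿ → ℝ be continuously differentiable and x(t) solve ẋ = f(x). If B(x) = 1/h(x) satisfies dB/dt ≤ γ/B along the solution for some γ > 0 and h(x₀) > 0 at t₀, then h(x(t)) ≥ 1/√(2γ(t−t₀) + 1/h(x₀)²) > 0 for all t ≥ t₀ in the interval of existence. -/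
/-!
Along the solution, `B = 1 / h(x)` satisfies `d(B²)/dt = 2 B Ḃ ≤ 2γ` as long as `h(x) > 0`, so
`B(t)² ≤ B(t₀)² + 2γ (t - t₀)`, which is the stated lower bound on `h(x(t))`. This bound is uniform
on `[t₀, T]`, so by continuity `h(x(t))` cannot reach `0` there.
-/

open Set

theorem sq_le_of_hasDerivAt_le_div {B B' : ℝ → ℝ} {a c γ : ℝ} (hac : a ≤ c)
    (hderiv : ∀ s ∈ Icc a c, HasDerivAt B (B' s) s) (hle : ∀ s ∈ Ico a c, B' s ≤ γ / B s)
    (hpos : ∀ s ∈ Ico a c, 0 < B s) :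
    B c ^ 2 ≤ 2 * γ * (c - a) + B a ^ 2 := by
  have hsq := image_le_of_deriv_right_le_deriv_boundary (f := fun s => B s ^ 2)
    (f' := fun s => 2 * B s * B' s) (a := a) (b := c)
    (B := fun s => 2 * γ * (s - a) + B a ^ 2) (B' := fun _ => 2 * γ)
    (fun s hs => ((hderiv s hs).continuousAt.pow 2).continuousWithinAt)
    (fun s hs => by simpa [mul_comm, mul_left_comm] using
      ((hderiv s (Ico_subset_Icc_self hs)).fun_pow 2).hasDerivWithinAt)
    (by simp) (by fun_prop)
    (fun s _ => by simpa using
      (((hasDerivAt_id s).sub_const a).const_mul (2 * γ)).add_const (B a ^ 2) |>.hasDerivWithinAt)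
    (fun s hs => by
      have := (le_div_iff₀' (hpos s hs)).1 (hle s hs)
      linarith)
  exact hsq (right_mem_Icc.2 hac)

theorem one_div_sqrt_le_of_one_div_sq_le {y r : ℝ} (hy : 0 < y) (h : (1 / y) ^ 2 ≤ r) :
    1 / √r ≤ y := by
  have hyr : 1 / y ≤ √r := Real.le_sqrt_of_sq_le h
  rwa [one_div_le ((one_div_pos.2 hy).trans_le hyr) hy]

theorem le_of_hasDerivAt_one_div_le {u B' : ℝ → ℝ} {a c γ : ℝ} (hac : a ≤ c)
    (hderiv : ∀ s ∈ Icc a c, HasDerivAt (fun s => 1 / u s) (B' s) s)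
    (hle : ∀ s ∈ Icc a c, B' s ≤ γ / (1 / u s)) (hpos : ∀ s ∈ Icc a c, 0 < u s) :
    1 / √(2 * γ * (c - a) + 1 / u a ^ 2) ≤ u c := by
  have hsq := sq_le_of_hasDerivAt_le_div hac hderiv (fun s hs => hle s (Ico_subset_Icc_self hs))
    fun s hs => one_div_pos.2 (hpos s (Ico_subset_Icc_self hs))
  rw [one_div_pow (u a)] at hsq
  exact one_div_sqrt_le_of_one_div_sq_le (hpos c (right_mem_Icc.2 hac)) hsq

/-- At the first zero `t₁` of `u`, continuity from the left forces `u t₁ ≥ m`. -/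
theorem ContinuousOn.forall_pos_of_forall_pos_imp_le {u : ℝ → ℝ} {a b m : ℝ}
    (hu : ContinuousOn u (Icc a b)) (ha : 0 < u a) (hm : 0 < m)
    (hbound : ∀ c ∈ Icc a b, (∀ s ∈ Icc a c, 0 < u s) → m ≤ u c) :
    ∀ t ∈ Icc a b, 0 < u t := by
  by_contra! hneg
  set K := Icc a b ∩ u ⁻¹' Iic 0
  have hKne : K.Nonempty := hneg
  have hKbdd : BddBelow K := ⟨a, fun s hs => hs.1.1⟩
  have ht₁ : sInf K ∈ K :=
    (hu.preimage_isClosed_of_isClosed isClosed_Icc isClosed_Iic).csInf_mem hKne hKbdd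
  set t₁ := sInf K
  have hat₁ : a < t₁ := ht₁.1.1.lt_of_ne fun h => (ht₁.2.trans_lt (h ▸ ha)).false
  have hsub : Icc a t₁ ⊆ Icc a b := Icc_subset_Icc_right ht₁.1.2
  have hbefore : Ico a t₁ ⊆ Icc a t₁ ∩ u ⁻¹' Ici m := fun s hs =>
    ⟨Ico_subset_Icc_self hs, hbound s (hsub (Ico_subset_Icc_self hs)) fun r hr => by
      by_contra! hr0
      exact notMem_of_lt_csInf (hr.2.trans_lt hs.2) hKbdd
        ⟨hsub ⟨hr.1, hr.2.trans hs.2.le⟩, hr0⟩⟩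
  have hclosed : IsClosed (Icc a t₁ ∩ u ⁻¹' Ici m) :=
    (hu.mono hsub).preimage_isClosed_of_isClosed isClosed_Icc isClosed_Ici
  have hmt₁ : m ≤ u t₁ :=
    (hclosed.closure_subset_iff.2 hbefore (by simp [closure_Ico hat₁.ne, hat₁.le])).2
  exact (hm.trans_le hmt₁).not_ge ht₁.2

theorem stmt9_general (n : ℕ) (f : (Fin n → ℝ) → (Fin n → ℝ))
    (h : (Fin n → ℝ) → ℝ) (hh : ContDiff ℝ 1 h)
    (t₀ T γ : ℝ) (hγ : 0 < γ) (x : ℝ → Fin n → ℝ)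
    (hx : ∀ t ∈ Set.Icc t₀ T, HasDerivAt x (f (x t)) t)
    (h0 : 0 < h (x t₀))
    (hB : ∀ t ∈ Set.Icc t₀ T, ∃ d : ℝ,
      HasDerivAt (fun s => 1 / h (x s)) d t ∧
      d ≤ γ / (1 / h (x t))) :
    ∀ t ∈ Set.Icc t₀ T,
      h (x t) ≥ 1 / Real.sqrt (2 * γ * (t - t₀) + 1 / (h (x t₀)) ^ 2) ∧
      0 < h (x t) := by
  intro t ht
  choose! B' hB' hB'le using hB
  have hcont : ContinuousOn (fun s => h (x s)) (Icc t₀ T) := fun s hs =>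
    (hh.continuous.continuousAt.comp (hx s hs).continuousAt).continuousWithinAt
  have hlower : ∀ c ∈ Icc t₀ T, (∀ s ∈ Icc t₀ c, 0 < h (x s)) →
      1 / √(2 * γ * (c - t₀) + 1 / h (x t₀) ^ 2) ≤ h (x c) := fun c hc hpos =>
    have hsub : Icc t₀ c ⊆ Icc t₀ T := Icc_subset_Icc_right hc.2
    le_of_hasDerivAt_one_div_le hc.1 (fun s hs => hB' s (hsub hs))
      (fun s hs => hB'le s (hsub hs)) hpos
  have hpos : ∀ s ∈ Icc t₀ T, 0 < h (x s) := by
    refine hcont.forall_pos_of_forall_pos_imp_le h0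
      (m := 1 / √(2 * γ * (T - t₀) + 1 / h (x t₀) ^ 2)) ?_ fun c hc hc' => ?_
    · have : 0 ≤ 2 * γ * (T - t₀) := by nlinarith [ht.1.trans ht.2]
      positivity
    · have : 0 ≤ 2 * γ * (c - t₀) := by nlinarith [hc.1]
      refine (one_div_le_one_div_of_le (by positivity) (Real.sqrt_le_sqrt ?_)).trans
        (hlower c hc hc')
      nlinarith [hc.2]
  exact ⟨hlower t ht fun s hs => hpos s ⟨hs.1, hs.2.trans ht.2⟩, hpos t ht⟩

/-- Inverse barrier B = 1/h with Ḃ ≤ γ/B yields h(x(t)) ≥ 1/√(2γ(t−t₀)+1/h(x₀)²) > 0. -/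
theorem stmt9 (n : ℕ) (f : (Fin n → ℝ) → (Fin n → ℝ)) (hf : LocallyLipschitz f)
    (h : (Fin n → ℝ) → ℝ) (hh : ContDiff ℝ 1 h)
    (t₀ T γ : ℝ) (hγ : 0 < γ) (x : ℝ → Fin n → ℝ)
    (hx : ∀ t ∈ Set.Icc t₀ T, HasDerivAt x (f (x t)) t)
    (h0 : 0 < h (x t₀))
    (hB : ∀ t ∈ Set.Icc t₀ T, ∃ d : ℝ,
      HasDerivAt (fun s => 1 / h (x s)) d t ∧
      d ≤ γ / (1 / h (x t))) :
    ∀ t ∈ Set.Icc t₀ T,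
      h (x t) ≥ 1 / Real.sqrt (2 * γ * (t - t₀) + 1 / (h (x t₀)) ^ 2) ∧
      0 < h (x t) :=
  stmt9_general n f h hh t₀ T γ hγ x hx h0 hB
end

section
/- For the scalar ODE ẏ = α(1/y) with α a class K function on (0,∞) extended so that ᾱ(z) = α(z)z² is class K on [0,∞), every initial condition y(t₀) = y₀ ∈ (0,∞) admits a unique solution defined for all t ≥ t₀, which moreover stays strictly positive: y(t) > 0 for all t ≥ t₀. -/
/-!
Separation of variables. Put `f y = α (1 / y)`, which is continuous and positive on `(0, ∞)`.
The travel time `F u = ∫_{y₀}^u ds / f s` is strictly increasing with `F' = 1 / f`, and a positive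
solution of `ẏ = f y`, `y t₀ = y₀` satisfies `(F ∘ y)' = 1`, i.e. `F (y t) = t - t₀`; injectivity
of `F` gives uniqueness. Since `α` is increasing, `f` is decreasing, so `F u ≥ (u - y₀) / f y₀`
is unbounded and `t ↦ F⁻¹ (t - t₀)` is a solution on all of `[t₀, ∞)`.
-/

open Set Filter Topology Function intervalIntegral

theorem StrictMonoOn.hasDerivAt_invFunOn {F F' : ℝ → ℝ} {s : Set ℝ} (hF : StrictMonoOn F s)
    (hs : IsOpen s) (hd : ∀ x ∈ s, HasDerivAt F (F' x) x) (hF' : ∀ x ∈ s, F' x ≠ 0) {r : ℝ}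
    (hr : F '' s ∈ 𝓝 r) : HasDerivAt (invFunOn F s) (F' (invFunOn F s r))⁻¹ r := by
  have hsurj : SurjOn F s (F '' s) := surjOn_image F s
  have hmem : invFunOn F s r ∈ s := hsurj.mapsTo_invFunOn (mem_of_mem_nhds hr)
  have hmono : MonotoneOn (invFunOn F s) (F '' s) := by
    rintro _ ⟨x, hx, rfl⟩ _ ⟨y, hy, rfl⟩ hxy
    rw [hF.injOn.leftInvOn_invFunOn hx, hF.injOn.leftInvOn_invFunOn hy]
    exact (hF.le_iff_le hx hy).mp hxy
  have hcont : ContinuousAt (invFunOn F s) r := by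
    refine continuousAt_of_monotoneOn_of_image_mem_nhds hmono hr ?_
    rw [hF.injOn.invFunOn_image subset_rfl]
    exact hs.mem_nhds hmem
  exact (hd _ hmem).of_local_left_inverse hcont (hF' _ hmem)
    (eventually_of_mem hr hsurj.rightInvOn_invFunOn)

section TravelTime

variable {f : ℝ → ℝ} {y₀ : ℝ}

noncomputable def travelTime (f : ℝ → ℝ) (y₀ u : ℝ) : ℝ := ∫ s in y₀..u, (f s)⁻¹

@[simp]
theorem travelTime_self : travelTime f y₀ y₀ = 0 := integral_same

theorem hasDerivAt_travelTime (hf : ContinuousOn f (Ioi 0)) (hf_pos : ∀ s ∈ Ioi (0 : ℝ), 0 < f s)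
    (hy₀ : 0 < y₀) {u : ℝ} (hu : 0 < u) : HasDerivAt (travelTime f y₀) (f u)⁻¹ u := by
  have hinv : ContinuousOn (fun s => (f s)⁻¹) (Ioi 0) := hf.inv₀ fun s hs => (hf_pos s hs).ne'
  refine integral_hasDerivAt_right ((hinv.mono ?_).intervalIntegrable)
    (hinv.stronglyMeasurableAtFilter isOpen_Ioi u hu) (hinv.continuousAt (Ioi_mem_nhds hu))
  exact fun s hs => lt_of_lt_of_le (lt_min hy₀ hu) hs.1

theorem strictMonoOn_travelTime (hf : ContinuousOn f (Ioi 0))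
    (hf_pos : ∀ s ∈ Ioi (0 : ℝ), 0 < f s) (hy₀ : 0 < y₀) :
    StrictMonoOn (travelTime f y₀) (Ioi 0) := by
  refine strictMonoOn_of_deriv_pos (convex_Ioi 0)
    (fun u hu => (hasDerivAt_travelTime hf hf_pos hy₀ hu).continuousAt.continuousWithinAt)
    fun u hu => ?_
  rw [interior_Ioi] at hu
  rw [(hasDerivAt_travelTime hf hf_pos hy₀ hu).deriv]
  exact inv_pos.mpr (hf_pos u hu)

theorem tendsto_travelTime_atTop (hf : ContinuousOn f (Ioi 0))
    (hf_pos : ∀ s ∈ Ioi (0 : ℝ), 0 < f s) (hy₀ : 0 < y₀) {C : ℝ} (hC : ∀ s, y₀ ≤ s → f s ≤ C) :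
    Tendsto (travelTime f y₀) atTop atTop := by
  have hC_pos : 0 < C := (hf_pos y₀ hy₀).trans_le (hC y₀ le_rfl)
  have hlower : ∀ u, y₀ ≤ u → (u - y₀) * C⁻¹ ≤ travelTime f y₀ u := by
    intro u hu
    have hinv : ContinuousOn (fun s => (f s)⁻¹) (Icc y₀ u) :=
      (hf.mono fun s hs => hy₀.trans_le hs.1).inv₀ fun s hs => (hf_pos s (hy₀.trans_le hs.1)).ne'
    calc (u - y₀) * C⁻¹ = ∫ _ in y₀..u, C⁻¹ := by simp
      _ ≤ travelTime f y₀ u :=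
        integral_mono_on hu intervalIntegrable_const (hinv.intervalIntegrable_of_Icc hu)
          fun s hs => inv_anti₀ (hf_pos s (hy₀.trans_le hs.1)) (hC s hs.1)
  refine tendsto_atTop_mono' atTop (eventually_ge_atTop y₀ |>.mono hlower) ?_
  exact (tendsto_atTop_add_const_right _ _ tendsto_id).atTop_mul_const (inv_pos.mpr hC_pos)

theorem travelTime_comp_solution (hf : ContinuousOn f (Ioi 0))
    (hf_pos : ∀ s ∈ Ioi (0 : ℝ), 0 < f s) (hy₀ : 0 < y₀) {y : ℝ → ℝ} {t₀ : ℝ} (hy0 : y t₀ = y₀)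
    (hy : ∀ t ∈ Ici t₀, 0 < y t ∧ HasDerivWithinAt y (f (y t)) (Ici t₀) t) :
    ∀ t ∈ Ici t₀, travelTime f y₀ (y t) = t - t₀ := by
  have hderiv : ∀ t ∈ Ici t₀, HasDerivWithinAt (travelTime f y₀ ∘ y) 1 (Ici t₀) t := by
    intro t ht
    obtain ⟨hpos, hdy⟩ := hy t ht
    simpa [(hf_pos _ hpos).ne'] using
      (hasDerivAt_travelTime hf hf_pos hy₀ hpos).comp_hasDerivWithinAt t hdy
  intro t ht
  refine eq_of_has_deriv_right_eq (f' := fun _ => 1)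
    (fun x hx => (hderiv x hx.1).mono (Ici_subset_Ici.mpr hx.1))
    (fun x _ => ((hasDerivAt_id x).sub_const t₀).hasDerivWithinAt)
    (fun x hx => ((hderiv x hx.1).continuousWithinAt).mono Icc_subset_Ici_self)
    (by fun_prop) (by simp [hy0]) t ⟨ht, le_rfl⟩

theorem eqOn_of_solutions (hf : ContinuousOn f (Ioi 0)) (hf_pos : ∀ s ∈ Ioi (0 : ℝ), 0 < f s)
    (hy₀ : 0 < y₀) {y z : ℝ → ℝ} {t₀ : ℝ} (hy0 : y t₀ = y₀)
    (hy : ∀ t ∈ Ici t₀, 0 < y t ∧ HasDerivWithinAt y (f (y t)) (Ici t₀) t) (hz0 : z t₀ = y₀)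
    (hz : ∀ t ∈ Ici t₀, 0 < z t ∧ HasDerivWithinAt z (f (z t)) (Ici t₀) t) :
    EqOn y z (Ici t₀) := fun t ht =>
  (strictMonoOn_travelTime hf hf_pos hy₀).injOn (hy t ht).1 (hz t ht).1 <|
    (travelTime_comp_solution hf hf_pos hy₀ hy0 hy t ht).trans
      (travelTime_comp_solution hf hf_pos hy₀ hz0 hz t ht).symm

theorem exists_solution (hf : ContinuousOn f (Ioi 0)) (hf_pos : ∀ s ∈ Ioi (0 : ℝ), 0 < f s)
    (hy₀ : 0 < y₀) {C : ℝ} (hC : ∀ s, y₀ ≤ s → f s ≤ C) (t₀ : ℝ) :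
    ∃ y : ℝ → ℝ, y t₀ = y₀ ∧ ∀ t ∈ Ici t₀, 0 < y t ∧ HasDerivAt y (f (y t)) t := by
  set F := travelTime f y₀
  have hF := strictMonoOn_travelTime hf hf_pos hy₀
  have hhalf : y₀ / 2 ∈ Ioi (0 : ℝ) := half_pos hy₀
  have hF_half : F (y₀ / 2) < 0 := by
    simpa [F] using hF hhalf hy₀ (half_lt_self hy₀)
  -- the range of `F` contains `[F (y₀ / 2), ∞)`, a neighbourhood of `[0, ∞)`
  have hrange : ∀ r, 0 ≤ r → F '' Ioi 0 ∈ 𝓝 r := by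
    intro r hr
    refine mem_of_superset (Ici_mem_nhds (hF_half.trans_le hr)) ?_
    refine (intermediate_value_Ici ?_ (tendsto_travelTime_atTop hf hf_pos hy₀ hC)).trans ?_
    · exact fun u hu => (hasDerivAt_travelTime hf hf_pos hy₀
        (hhalf.trans_le hu)).continuousAt.continuousWithinAt
    · exact image_mono fun u (hu : y₀ / 2 ≤ u) => mem_Ioi.mpr (hhalf.trans_le hu)
  refine ⟨fun t => invFunOn F (Ioi 0) (t - t₀), ?_, fun t ht => ⟨?_, ?_⟩⟩
  · simpa [F] using hF.injOn.leftInvOn_invFunOn hy₀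
  · exact (surjOn_image F _).mapsTo_invFunOn (mem_of_mem_nhds (hrange _ (sub_nonneg.mpr ht)))
  · have hinv := hF.hasDerivAt_invFunOn isOpen_Ioi
      (fun u hu => hasDerivAt_travelTime hf hf_pos hy₀ hu)
      (fun u hu => (inv_pos.mpr (hf_pos u hu)).ne') (hrange _ (sub_nonneg.mpr ht))
    simpa using hinv.comp_sub_const t t₀

end TravelTime

theorem stmt10_general (α : ℝ → ℝ)
    (hcα : ContinuousOn α (Set.Ioi 0)) (hmα : StrictMonoOn α (Set.Ioi 0))
    (hposα : ∀ z ∈ Set.Ioi (0:ℝ), 0 < α z)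
    (t₀ y₀ : ℝ) (hy₀ : 0 < y₀) :
    ∃ y : ℝ → ℝ,
      (y t₀ = y₀ ∧ ∀ t ∈ Set.Ici t₀, 0 < y t ∧
        HasDerivWithinAt y (α (1 / y t)) (Set.Ici t₀) t) ∧
      ∀ y' : ℝ → ℝ, (y' t₀ = y₀ ∧ ∀ t ∈ Set.Ici t₀, 0 < y' t ∧
        HasDerivWithinAt y' (α (1 / y' t)) (Set.Ici t₀) t) →
        ∀ t ∈ Set.Ici t₀, y' t = y t := by
  set f : ℝ → ℝ := fun s => α (1 / s)
  have hf_pos : ∀ s ∈ Ioi (0 : ℝ), 0 < f s := fun s hs => hposα _ (one_div_pos.mpr hs : 0 < 1 / s)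
  have hf : ContinuousOn f (Ioi 0) :=
    hcα.comp (continuousOn_const.div continuousOn_id fun s hs => ne_of_gt hs)
      fun s (hs : 0 < s) => mem_Ioi.mpr (one_div_pos.mpr hs)
  have hf_le : ∀ s, y₀ ≤ s → f s ≤ f y₀ := fun s hs =>
    hmα.monotoneOn (one_div_pos.mpr (hy₀.trans_le hs)) (one_div_pos.mpr hy₀)
      (one_div_le_one_div_of_le hy₀ hs)
  obtain ⟨y, hy0, hy⟩ := exists_solution hf hf_pos hy₀ hf_le t₀
  have hsol : ∀ t ∈ Ici t₀, 0 < y t ∧ HasDerivWithinAt y (f (y t)) (Ici t₀) t :=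
    fun t ht => ⟨(hy t ht).1, (hy t ht).2.hasDerivWithinAt⟩
  exact ⟨y, ⟨hy0, hsol⟩, fun y' ⟨hy'0, hy'⟩ =>
    eqOn_of_solutions hf hf_pos hy₀ hy'0 hy' hy0 hsol⟩

/-- Lemma 2: ẏ = α(1/y) with α class K on (0,∞) and ᾱ(z)=α(z)z² class K on [0,∞)
has a unique, globally defined, strictly positive solution from each y₀ > 0. -/
theorem stmt10 (α : ℝ → ℝ)
    (hcα : ContinuousOn α (Set.Ioi 0)) (hmα : StrictMonoOn α (Set.Ioi 0))
    (hposα : ∀ z ∈ Set.Ioi (0:ℝ), 0 < α z)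
    (hcb : ContinuousOn (fun z => α z * z ^ 2) (Set.Ici 0))
    (hmb : StrictMonoOn (fun z => α z * z ^ 2) (Set.Ici 0))
    (h0b : α 0 * 0 ^ 2 = 0)
    (t₀ y₀ : ℝ) (hy₀ : 0 < y₀) :
    ∃ y : ℝ → ℝ,
      (y t₀ = y₀ ∧ ∀ t ∈ Set.Ici t₀, 0 < y t ∧
        HasDerivWithinAt y (α (1 / y t)) (Set.Ici t₀) t) ∧
      ∀ y' : ℝ → ℝ, (y' t₀ = y₀ ∧ ∀ t ∈ Set.Ici t₀, 0 < y' t ∧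
        HasDerivWithinAt y' (α (1 / y' t)) (Set.Ici t₀) t) →
        ∀ t ∈ Set.Ici t₀, y' t = y t :=
  stmt10_general α hcα hmα hposα t₀ y₀ hy₀
end

section
/- (Necessity of ZBFs, Proposition 3) Let C = {x : h(x) ≥ 0} be nonempty and compact with h: ℝⁿ → ℝ continuously differentiable, and suppose C is forward invariant for ẋ = f(x) with f locally Lipschitz. Then there exists a class K function α̂ (defined on [0,∞)) such that L_f h(x) ≥ −α̂(h(x)) for all x ∈ C, i.e., h restricted to C is a zeroing barrier function. -/
/-!
Along a solution starting on the boundary `{h = 0}`, `h` has a one-sided minimum at time `0`,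
so invariance forces `L_f h ≥ 0` there (Nagumo). Hence `r ↦ max(0, sup {-L_f h x : x ∈ C, h x ≤ r})`
is a monotone function vanishing at `0`, and by compactness of `C` it is continuous from the
right at `0`. Any such function is dominated on `[0, ∞)` by the class `K` function
`r ↦ r + ∫₁² φ(r u) du`, which is continuous because averaging over `[r, 2r]` smooths out the
jumps of a monotone function.
-/

open Set Filter Topology NNReal MeasureTheory

theorem LocallyLipschitz.exists_eq_forall_mem_Ioo_hasDerivAt {E : Type*} [NormedAddCommGroup E]
    [NormedSpace ℝ E] [CompleteSpace E] {v : E → E} (hv : LocallyLipschitz v) (x₀ : E) (t₀ : ℝ) :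
    ∃ γ : ℝ → E, γ t₀ = x₀ ∧
      ∃ ε > (0 : ℝ), ∀ t ∈ Ioo (t₀ - ε) (t₀ + ε), HasDerivAt γ (v (γ t)) t := by
  obtain ⟨K, s, hs, hK⟩ := hv x₀
  obtain ⟨a, ha, has⟩ := Metric.mem_nhds_iff.mp hs
  set r : ℝ≥0 := ⟨a / 2, by positivity⟩
  have hr : (0 : ℝ) < r := half_pos ha
  have hball : Metric.closedBall x₀ r ⊆ s :=
    (Metric.closedBall_subset_ball (half_lt_self ha)).trans has
  set L : ℝ≥0 := K * r + ‖v x₀‖₊ + 1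
  have hL : (0 : ℝ) < L := by positivity
  have hbound : ∀ x ∈ Metric.closedBall x₀ r, ‖v x‖ ≤ L := fun x hx =>
    calc ‖v x‖ ≤ ‖v x - v x₀‖ + ‖v x₀‖ := norm_le_norm_sub_add _ _
      _ ≤ K * ‖x - x₀‖ + ‖v x₀‖ :=
        by gcongr; exact (hK.mono hball).norm_sub_le hx (Metric.mem_closedBall_self r.2)
      _ ≤ K * r + ‖v x₀‖ := by gcongr; exact mem_closedBall_iff_norm.mp hx
      _ ≤ L := by simp [L]
  set ε := (r : ℝ) / L
  have hε : 0 < ε := div_pos hr hL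
  have hpl : IsPicardLindelof (fun _ ↦ v) (tmin := t₀ - ε) (tmax := t₀ + ε)
      ⟨t₀, by simp [hε.le]⟩ x₀ r 0 L K :=
    .of_time_independent hbound (hK.mono hball) <| by
      simp only [add_sub_cancel_left, sub_sub_cancel, max_self, NNReal.coe_zero, sub_zero, ε]
      rw [mul_div_cancel₀ _ hL.ne']
  obtain ⟨γ, hγ₀, hγ⟩ := hpl.exists_eq_forall_mem_Icc_hasDerivWithinAt₀
  exact ⟨γ, hγ₀, ε, hε, fun t ht =>
    (hγ t (Ioo_subset_Icc_self ht)).hasDerivAt (Icc_mem_nhds ht.1 ht.2)⟩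

theorem HasDerivAt.nonneg_of_isMinOn_Icc {g : ℝ → ℝ} {d a b : ℝ} (hab : a < b)
    (hg : HasDerivAt g d a) (hmin : IsMinOn g (Icc a b) a) : 0 ≤ d := by
  have hcone : b - a ∈ posTangentConeAt (Icc a b) a :=
    sub_mem_posTangentConeAt_of_segment_subset (segment_eq_Icc hab.le).subset
  have := hmin.localize.hasFDerivWithinAt_nonneg hg.hasFDerivAt.hasFDerivWithinAt hcone
  simp only [ContinuousLinearMap.toSpanSingleton_apply, smul_eq_mul] at this
  exact nonneg_of_mul_nonneg_right this (sub_pos.mpr hab)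

def ODE.IsForwardInvariant {E : Type*} [NormedAddCommGroup E] [NormedSpace ℝ E] (f : E → E)
    (C : Set E) : Prop :=
  ∀ (x : ℝ → E) (t₀ T : ℝ), (∀ t ∈ Icc t₀ T, HasDerivAt x (f (x t)) t) →
    x t₀ ∈ C → ∀ t ∈ Icc t₀ T, x t ∈ C

theorem ODE.IsForwardInvariant.fderiv_apply_nonneg {E : Type*} [NormedAddCommGroup E]
    [NormedSpace ℝ E] [CompleteSpace E] {f : E → E} {h : E → ℝ}
    (hinv : IsForwardInvariant f {x | 0 ≤ h x}) (hf : LocallyLipschitz f) {x : E} (hx : h x = 0)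
    (hd : DifferentiableAt ℝ h x) : 0 ≤ fderiv ℝ h x (f x) := by
  obtain ⟨γ, hγ₀, ε, hε, hγ⟩ := hf.exists_eq_forall_mem_Ioo_hasDerivAt x 0
  have hsol : ∀ t ∈ Icc 0 (ε / 2), HasDerivAt γ (f (γ t)) t := fun t ht =>
    hγ t ⟨by linarith [ht.1], by linarith [ht.2]⟩
  have hmin : IsMinOn (h ∘ γ) (Icc 0 (ε / 2)) 0 := fun t ht => by
    simpa [hγ₀, hx] using hinv γ 0 (ε / 2) hsol (by simp [hγ₀, hx]) t ht
  have hγ' : HasDerivAt γ (f x) 0 := hγ₀ ▸ hsol 0 ⟨le_rfl, by positivity⟩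
  have hd' : HasFDerivAt h (fderiv ℝ h x) (γ 0) := hγ₀ ▸ hd.hasFDerivAt
  exact (hd'.comp_hasDerivAt 0 hγ').nonneg_of_isMinOn_Icc (half_pos hε) hmin

structure IsClassK (α : ℝ → ℝ) : Prop where
  continuousOn : ContinuousOn α (Ici 0)
  strictMonoOn : StrictMonoOn α (Ici 0)
  map_zero : α 0 = 0

section DilationAverage

variable {φ : ℝ → ℝ} {r : ℝ}

noncomputable def dilationAverage (φ : ℝ → ℝ) (r : ℝ) : ℝ :=
  ∫ u in (1 : ℝ)..2, φ (r * u)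

theorem Monotone.intervalIntegrable_comp_mul (hφ : Monotone φ) (hr : 0 ≤ r) :
    IntervalIntegrable (fun u => φ (r * u)) volume 1 2 :=
  (hφ.comp (monotone_mul_left_of_nonneg hr)).intervalIntegrable

theorem Monotone.monotoneOn_dilationAverage (hφ : Monotone φ) :
    MonotoneOn (dilationAverage φ) (Ici 0) := fun r hr s hs hrs =>
  intervalIntegral.integral_mono_on one_le_two (hφ.intervalIntegrable_comp_mul hr)
    (hφ.intervalIntegrable_comp_mul hs) fun u hu => hφ (by nlinarith [hu.1])

theorem Monotone.le_dilationAverage (hφ : Monotone φ) (hr : 0 ≤ r) : φ r ≤ dilationAverage φ r := by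
  have := intervalIntegral.integral_mono_on one_le_two intervalIntegrable_const
    (hφ.intervalIntegrable_comp_mul hr) fun u hu => hφ (le_mul_of_one_le_right hr hu.1)
  norm_num at this
  exact this

theorem Monotone.dilationAverage_le (hφ : Monotone φ) (hr : 0 ≤ r) :
    dilationAverage φ r ≤ φ (2 * r) := by
  have := intervalIntegral.integral_mono_on one_le_two (hφ.intervalIntegrable_comp_mul hr)
    intervalIntegrable_const fun u hu => hφ (by nlinarith [hu.2] : r * u ≤ 2 * r)
  norm_num at this
  exact this

theorem dilationAverage_eq_inv_mul_sub (hφ : ∀ a b, IntervalIntegrable φ volume a b) (hr : r ≠ 0) :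
    dilationAverage φ r = r⁻¹ * ((∫ s in (0 : ℝ)..2 * r, φ s) - ∫ s in (0 : ℝ)..r, φ s) := by
  rw [dilationAverage, intervalIntegral.integral_comp_mul_left φ hr, smul_eq_mul, mul_one,
    mul_comm r 2, intervalIntegral.integral_interval_sub_left (hφ _ _) (hφ _ _)]

theorem Monotone.continuousOn_dilationAverage (hφ : Monotone φ) :
    ContinuousOn (dilationAverage φ) (Ioi 0) := by
  have hint : ∀ a b, IntervalIntegrable φ volume a b := fun _ _ => hφ.intervalIntegrable
  have hF := intervalIntegral.continuous_primitive hint 0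
  refine ContinuousOn.congr ?_ fun r hr => dilationAverage_eq_inv_mul_sub hint (ne_of_gt hr)
  exact (continuousOn_inv₀.mono fun r hr => ne_of_gt hr).mul
    ((hF.comp (continuous_const_mul 2)).sub hF).continuousOn

theorem Monotone.continuousWithinAt_dilationAverage_zero (hφ : Monotone φ) (h0 : φ 0 = 0)
    (hc : ContinuousWithinAt φ (Ici 0) 0) : ContinuousWithinAt (dilationAverage φ) (Ici 0) 0 := by
  have hdouble : Tendsto (fun r : ℝ => 2 * r) (𝓝[Ici 0] 0) (𝓝[Ici 0] 0) := by
    simpa using (continuous_const_mul (2 : ℝ)).continuousWithinAt.tendsto_nhdsWithin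
      (x := 0) (s := Ici 0) (t := Ici 0) fun r (hr : 0 ≤ r) => mem_Ici.mpr (by positivity)
  have hφ2 : Tendsto (fun r => φ (2 * r)) (𝓝[Ici 0] 0) (𝓝 0) := by
    simpa only [h0, Function.comp_def] using hc.tendsto.comp hdouble
  rw [ContinuousWithinAt, show dilationAverage φ 0 = 0 by simp [dilationAverage, h0]]
  refine tendsto_of_tendsto_of_tendsto_of_le_of_le' tendsto_const_nhds hφ2 ?_ ?_ <;>
    filter_upwards [self_mem_nhdsWithin] with r (hr : 0 ≤ r)
  · exact h0 ▸ (hφ hr).trans (hφ.le_dilationAverage hr)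
  · exact hφ.dilationAverage_le hr

end DilationAverage

theorem Monotone.exists_isClassK_le {φ : ℝ → ℝ} (hφ : Monotone φ) (h0 : φ 0 = 0)
    (hc : ContinuousWithinAt φ (Ici 0) 0) : ∃ α, IsClassK α ∧ ∀ r, 0 ≤ r → φ r ≤ α r := by
  refine ⟨fun r => r + dilationAverage φ r, ⟨fun r hr => ?_, fun r hr s hs hrs => ?_, ?_⟩,
    fun r hr => ?_⟩
  · refine continuousWithinAt_id.add ?_
    rcases (mem_Ici.mp hr).eq_or_lt with rfl | hpos
    · exact hφ.continuousWithinAt_dilationAverage_zero h0 hc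
    · exact (hφ.continuousOn_dilationAverage.continuousAt (Ioi_mem_nhds hpos)).continuousWithinAt
  · exact add_lt_add_of_lt_of_le hrs (hφ.monotoneOn_dilationAverage hr hs hrs.le)
  · simp [dilationAverage, h0]
  · linarith [hφ.le_dilationAverage hr]

section SublevelSup

variable {X : Type*} {K : Set X} {h ψ : X → ℝ}

noncomputable def sublevelSup (K : Set X) (h ψ : X → ℝ) (r : ℝ) : ℝ :=
  sSup (insert 0 (ψ '' (K ∩ {x | h x ≤ r})))

theorem le_sublevelSup (hψ : BddAbove (ψ '' K)) {x : X} (hx : x ∈ K) {r : ℝ} (hr : h x ≤ r) :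
    ψ x ≤ sublevelSup K h ψ r :=
  le_csSup ((hψ.mono (image_mono inter_subset_left)).insert 0)
    (mem_insert_of_mem _ ⟨x, ⟨hx, hr⟩, rfl⟩)

theorem sublevelSup_nonneg (hψ : BddAbove (ψ '' K)) (r : ℝ) : 0 ≤ sublevelSup K h ψ r :=
  le_csSup ((hψ.mono (image_mono inter_subset_left)).insert 0) (mem_insert _ _)

theorem sublevelSup_le {r c : ℝ} (hc : 0 ≤ c) (H : ∀ x ∈ K, h x ≤ r → ψ x ≤ c) :
    sublevelSup K h ψ r ≤ c :=
  csSup_le (insert_nonempty _ _) <| by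
    rintro _ (rfl | ⟨x, ⟨hx, hxr⟩, rfl⟩)
    exacts [hc, H x hx hxr]

theorem monotone_sublevelSup (hψ : BddAbove (ψ '' K)) : Monotone (sublevelSup K h ψ) :=
  fun _ _ hrs => sublevelSup_le (sublevelSup_nonneg hψ _) fun _ hx hxr =>
    le_sublevelSup hψ hx (hxr.trans hrs)

theorem sublevelSup_zero (hψ : BddAbove (ψ '' K)) (hzero : ∀ x ∈ K, h x ≤ 0 → ψ x ≤ 0) :
    sublevelSup K h ψ 0 = 0 :=
  le_antisymm (sublevelSup_le le_rfl hzero) (sublevelSup_nonneg hψ 0)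

variable [TopologicalSpace X]

theorem IsCompact.exists_pos_forall_lt_of_le_zero (hK : IsCompact K) (hh : Continuous h)
    (hψ : Continuous ψ) (hzero : ∀ x ∈ K, h x ≤ 0 → ψ x ≤ 0) {ε : ℝ} (hε : 0 < ε) :
    ∃ δ > 0, ∀ x ∈ K, h x < δ → ψ x < ε := by
  obtain ⟨δ, hδ, hδle⟩ := (hK.inter_right (isClosed_Ici.preimage hψ)).exists_forall_le'
    hh.continuousOn (a := 0) fun x (hx : x ∈ K ∩ ψ ⁻¹' Ici ε) =>
      lt_of_not_ge fun hx0 => (hzero x hx.1 hx0).not_gt (hε.trans_le hx.2)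
  exact ⟨δ, hδ, fun x hx hxδ => lt_of_not_ge fun hεx => (hδle x ⟨hx, hεx⟩).not_gt hxδ⟩

theorem continuousWithinAt_sublevelSup (hK : IsCompact K) (hh : Continuous h)
    (hψ : Continuous ψ) (hzero : ∀ x ∈ K, h x ≤ 0 → ψ x ≤ 0) :
    ContinuousWithinAt (sublevelSup K h ψ) (Ici 0) 0 := by
  have hbdd : BddAbove (ψ '' K) := (hK.image hψ).bddAbove
  rw [ContinuousWithinAt, sublevelSup_zero hbdd hzero, tendsto_order]
  refine ⟨fun a ha => Eventually.of_forall fun r => ha.trans_le (sublevelSup_nonneg hbdd r),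
    fun ε hε => ?_⟩
  obtain ⟨δ, hδ, hsmall⟩ := hK.exists_pos_forall_lt_of_le_zero hh hψ hzero (half_pos hε)
  filter_upwards [nhdsWithin_le_nhds (gt_mem_nhds hδ)] with r hr
  have hle : sublevelSup K h ψ r ≤ ε / 2 :=
    sublevelSup_le (half_pos hε).le fun x hx hxr => (hsmall x hx (hxr.trans_lt hr)).le
  exact hle.trans_lt (half_lt_self hε)

end SublevelSup

theorem IsCompact.exists_isClassK_le_comp {X : Type*} [TopologicalSpace X] {K : Set X}
    {h ψ : X → ℝ} (hK : IsCompact K) (hh : Continuous h) (hψ : Continuous ψ)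
    (hzero : ∀ x ∈ K, h x ≤ 0 → ψ x ≤ 0) :
    ∃ α, IsClassK α ∧ ∀ x ∈ K, 0 ≤ h x → ψ x ≤ α (h x) := by
  have hbdd : BddAbove (ψ '' K) := (hK.image hψ).bddAbove
  obtain ⟨α, hα, hle⟩ := (monotone_sublevelSup (h := h) hbdd).exists_isClassK_le
    (sublevelSup_zero hbdd hzero) (continuousWithinAt_sublevelSup hK hh hψ hzero)
  exact ⟨α, hα, fun x hx hx0 => (le_sublevelSup hbdd hx le_rfl).trans (hle _ hx0)⟩

theorem stmt12_general (n : ℕ) (f : (Fin n → ℝ) → (Fin n → ℝ)) (hf : LocallyLipschitz f)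
    (h : (Fin n → ℝ) → ℝ) (hh : ContDiff ℝ 1 h)
    (hcomp : IsCompact {x | 0 ≤ h x})
    (hinv : ∀ (x : ℝ → Fin n → ℝ) (t₀ T : ℝ),
      (∀ t ∈ Set.Icc t₀ T, HasDerivAt x (f (x t)) t) →
      0 ≤ h (x t₀) → ∀ t ∈ Set.Icc t₀ T, 0 ≤ h (x t)) :
    ∃ αhat : ℝ → ℝ,
      ContinuousOn αhat (Set.Ici 0) ∧ StrictMonoOn αhat (Set.Ici 0) ∧ αhat 0 = 0 ∧
      ∀ x, 0 ≤ h x → fderiv ℝ h x (f x) ≥ -αhat (h x) := by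
  set L : (Fin n → ℝ) → ℝ := fun x => fderiv ℝ h x (f x)
  have hL : Continuous L := (hh.continuous_fderiv one_ne_zero).clm_apply hf.continuous
  have hboundary : ∀ x ∈ {x | 0 ≤ h x}, h x ≤ 0 → -L x ≤ 0 := fun x hx hx0 =>
    neg_nonpos.mpr <| ODE.IsForwardInvariant.fderiv_apply_nonneg hinv hf (le_antisymm hx0 hx)
      (hh.differentiable one_ne_zero x)
  obtain ⟨α, hα, hle⟩ := hcomp.exists_isClassK_le_comp hh.continuous hL.neg hboundary
  exact ⟨α, hα.continuousOn, hα.strictMonoOn, hα.map_zero, fun x hx => neg_le.mp (hle x hx hx)⟩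

/-- Proposition 3 (necessity of ZBFs): if the nonempty compact set C = {h ≥ 0}
is forward invariant for ẋ = f(x), then h|_C is a zeroing barrier function:
there is a class K function α̂ with L_f h(x) ≥ −α̂(h(x)) on C. -/
theorem stmt12 (n : ℕ) (f : (Fin n → ℝ) → (Fin n → ℝ)) (hf : LocallyLipschitz f)
    (h : (Fin n → ℝ) → ℝ) (hh : ContDiff ℝ 1 h)
    (hne : {x | 0 ≤ h x}.Nonempty) (hcomp : IsCompact {x | 0 ≤ h x})
    (hinv : ∀ (x : ℝ → Fin n → ℝ) (t₀ T : ℝ),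
      (∀ t ∈ Set.Icc t₀ T, HasDerivAt x (f (x t)) t) →
      0 ≤ h (x t₀) → ∀ t ∈ Set.Icc t₀ T, 0 ≤ h (x t)) :
    ∃ αhat : ℝ → ℝ,
      ContinuousOn αhat (Set.Ici 0) ∧ StrictMonoOn αhat (Set.Ici 0) ∧ αhat 0 = 0 ∧
      ∀ x, 0 ≤ h x → fderiv ℝ h x (f x) ≥ -αhat (h x) :=
  stmt12_general n f hf h hh hcomp hinv
end

section
/- (Lemma 3) Let C = {x : h(x) ≥ 0} be a nonempty compact set with h continuously differentiable, C = closure(Int C), Int(C) = {h > 0}, ∂C = {h = 0}. Suppose ḣ(x) := L_f h(x) > 0 for all x ∈ ∂C. Then for every integer k ≥ 1 there exists γ > 0 such that L_f h(x) ≥ −γ h(x)ᵏ for all x ∈ Int(C). -/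
/-!
Where `L_f h ≤ 0` inside `C`, the point is bounded away from `∂C`: the set
`K = {h ≥ 0, L_f h ≤ 0}` is compact and misses `{h = 0}`, so `h ≥ m > 0` on `K`, while
`L_f h ≥ c` on `K` by compactness. Hence `γ = (|c| + 1) / mᵏ` works on `K`, and off `K`
the inequality holds for any `γ > 0` because `L_f h > 0` there.
-/

theorem exists_neg_mul_pow_le_of_pos_of_eq_zero {X : Type*} [TopologicalSpace X]
    {h g : X → ℝ} (hh : Continuous h) (hg : Continuous g)
    (hcomp : IsCompact {x | 0 ≤ h x}) (hbdry : ∀ x, h x = 0 → 0 < g x) (k : ℕ) :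
    ∃ γ : ℝ, 0 < γ ∧ ∀ x, 0 < h x → -γ * h x ^ k ≤ g x := by
  set K := {x | 0 ≤ h x ∧ g x ≤ 0}
  have hK : IsCompact K := hcomp.of_isClosed_subset
    ((isClosed_le continuous_const hh).inter (isClosed_le hg continuous_const)) fun _ hx => hx.1
  have h_pos_on_K : ∀ x ∈ K, 0 < h x := fun x ⟨hx, hgx⟩ =>
    hx.lt_of_ne fun hx0 => (hbdry x hx0.symm).not_ge hgx
  obtain ⟨m, hm, hmK⟩ := hK.exists_forall_le' hh.continuousOn h_pos_on_K
  obtain ⟨c, hc⟩ := hK.bddBelow_image hg.continuousOn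
  have hmk : 0 < m ^ k := pow_pos hm k
  refine ⟨(|c| + 1) / m ^ k, by positivity, fun x hx => ?_⟩
  by_cases hgx : g x ≤ 0
  · have hxK : x ∈ K := ⟨hx.le, hgx⟩
    calc -((|c| + 1) / m ^ k) * h x ^ k = -((|c| + 1) / m ^ k * h x ^ k) := neg_mul _ _
      _ ≤ -((|c| + 1) / m ^ k * m ^ k) := by
          gcongr
          exact hmK x hxK
      _ = -(|c| + 1) := by field_simp
      _ ≤ c := by linarith [neg_abs_le c]
      _ ≤ g x := hc ⟨x, hxK, rfl⟩
  · have : 0 < (|c| + 1) / m ^ k * h x ^ k := by positivity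
    linarith

theorem stmt13_general (n : ℕ) (f : (Fin n → ℝ) → (Fin n → ℝ)) (hf : LocallyLipschitz f)
    (h : (Fin n → ℝ) → ℝ) (hh : ContDiff ℝ 1 h)
    (hcomp : IsCompact {x | 0 ≤ h x})
    (hbdry : ∀ x, h x = 0 → 0 < fderiv ℝ h x (f x)) :
    ∀ k : ℕ, 1 ≤ k → ∃ γ : ℝ, 0 < γ ∧
      ∀ x, 0 < h x → fderiv ℝ h x (f x) ≥ -γ * (h x) ^ k := fun k _ =>
  exists_neg_mul_pow_le_of_pos_of_eq_zero hh.continuous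
    ((hh.continuous_fderiv one_ne_zero).clm_apply hf.continuous) hcomp hbdry k

/-- Lemma 3: C = {h ≥ 0} nonempty compact, C = closure{h > 0}, and L_f h > 0 on
{h = 0}; then for each k ≥ 1 there is γ > 0 with L_f h ≥ −γ hᵏ on Int(C). -/
theorem stmt13 (n : ℕ) (f : (Fin n → ℝ) → (Fin n → ℝ)) (hf : LocallyLipschitz f)
    (h : (Fin n → ℝ) → ℝ) (hh : ContDiff ℝ 1 h)
    (hne : {x | 0 ≤ h x}.Nonempty) (hcomp : IsCompact {x | 0 ≤ h x})
    (hcl : {x | 0 ≤ h x} = closure {x | 0 < h x})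
    (hbdry : ∀ x, h x = 0 → 0 < fderiv ℝ h x (f x)) :
    ∀ k : ℕ, 1 ≤ k → ∃ γ : ℝ, 0 < γ ∧
      ∀ x, 0 < h x → fderiv ℝ h x (f x) ≥ -γ * (h x) ^ k :=
  stmt13_general n f hf h hh hcomp hbdry
end

section
/- (Counterexample) Consider the planar system ẋ₁ = −x₂/2, ẋ₂ = −x₁³ + 1 and h(x) = x₂ − x₁². Then ḣ(x) = x₁(x₂ − x₁²) + 1; in particular ḣ = 1 > 0 on ∂C = {h = 0}, so C = {h ≥ 0} is forward invariant; yet for every r > 0, inf{ḣ(x) : h(x) = r} = −∞, so there is no extended class K function α with ḣ ≥ −α(h) on C. -/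
/-!
Along a solution `x` of the system, `y = h ∘ x` solves the scalar linear equation `y' = x₁ y + 1`;
multiplied by the integrating factor `exp (-∫ x₁)` it becomes nondecreasing, so `{h ≥ 0}` is forward
invariant. On the level set `{h = r}` the first coordinate is free and `ḣ = x₁ r + 1`, which for
`r ≠ 0` is unbounded below, whereas `ḣ ≥ -α (h)` would bound it below by `-α r`.
-/

open ContinuousLinearMap

theorem nonneg_of_hasDerivAt_eq_mul_add {y c b : ℝ → ℝ} (hc : Continuous c) (hb : ∀ t, 0 ≤ b t)
    (hy : ∀ t, HasDerivAt y (c t * y t + b t) t) {s t : ℝ} (hs : 0 ≤ y s) (hst : s ≤ t) :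
    0 ≤ y t := by
  set I : ℝ → ℝ := fun t => ∫ u in (0 : ℝ)..t, c u
  have hI : ∀ t, HasDerivAt I (c t) t := fun t => (hc.integral_hasStrictDerivAt 0 t).hasDerivAt
  set g : ℝ → ℝ := fun t => y t * Real.exp (-I t)
  have hg : ∀ t, HasDerivAt g (b t * Real.exp (-I t)) t := fun t =>
    ((hy t).mul (hI t).neg.exp).congr_deriv (by rw [Pi.neg_apply]; ring)
  have hg_mono : Monotone g :=
    monotone_of_hasDerivAt_nonneg hg fun t => mul_nonneg (hb t) (Real.exp_pos _).le
  have hy_eq : ∀ t, y t = g t * Real.exp (I t) := fun t => by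
    simp only [g, mul_assoc, ← Real.exp_add, neg_add_cancel, Real.exp_zero, mul_one]
  have hgs : 0 ≤ g s := mul_nonneg hs (Real.exp_pos _).le
  rw [hy_eq]
  exact mul_nonneg (hgs.trans (hg_mono hst)) (Real.exp_pos _).le

theorem hasFDerivAt_snd_sub_fst_sq (x : ℝ × ℝ) :
    HasFDerivAt (fun x : ℝ × ℝ => x.2 - x.1 ^ 2) (snd ℝ ℝ ℝ - (2 * x.1) • fst ℝ ℝ ℝ) x := by
  have hsq : HasFDerivAt (fun x : ℝ × ℝ => x.1 ^ 2) ((2 * x.1) • fst ℝ ℝ ℝ) x := by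
    simpa [Function.comp_def] using
      (hasDerivAt_pow 2 x.1).comp_hasFDerivAt x (hasFDerivAt_fst (𝕜 := ℝ))
  exact hasFDerivAt_snd.sub hsq

theorem fderiv_snd_sub_fst_sq_apply (x v : ℝ × ℝ) :
    fderiv ℝ (fun x : ℝ × ℝ => x.2 - x.1 ^ 2) x v = v.2 - 2 * x.1 * v.1 := by
  simp [(hasFDerivAt_snd_sub_fst_sq x).fderiv, mul_assoc]

theorem not_bddBelow_image_levelSet_snd_sub_fst_sq {r : ℝ} (hr : r ≠ 0) :
    ¬ BddBelow ((fun x : ℝ × ℝ => x.1 * (x.2 - x.1 ^ 2) + 1) '' {x | x.2 - x.1 ^ 2 = r}) := by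
  rintro ⟨m, hm⟩
  have hmem : ((m - 2) / r, ((m - 2) / r) ^ 2 + r) ∈ {x : ℝ × ℝ | x.2 - x.1 ^ 2 = r} := by
    simp
  have := hm ⟨_, hmem, rfl⟩
  simp only [add_sub_cancel_left, div_mul_cancel₀ _ hr] at this
  linarith

/-- Counterexample: for ẋ₁ = −x₂/2, ẋ₂ = −x₁³+1 and h = x₂ − x₁², one has
ḣ = x₁(x₂ − x₁²)+1, ḣ = 1 on {h = 0}, C = {h ≥ 0} is forward invariant, yet
ḣ is unbounded below on every level set {h = r}, r > 0, so no (extended)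
class K function α gives ḣ ≥ −α(h) on C. -/
theorem stmt15 :
    let f : ℝ × ℝ → ℝ × ℝ := fun x => (-x.2 / 2, -x.1 ^ 3 + 1)
    let h : ℝ × ℝ → ℝ := fun x => x.2 - x.1 ^ 2
    (∀ x, fderiv ℝ h x (f x) = x.1 * (x.2 - x.1 ^ 2) + 1) ∧
    (∀ x, h x = 0 → fderiv ℝ h x (f x) = 1) ∧
    (∀ x : ℝ → ℝ × ℝ, (∀ t, HasDerivAt x (f (x t)) t) → 0 ≤ h (x 0) →
      ∀ t ≥ (0:ℝ), 0 ≤ h (x t)) ∧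
    (∀ r : ℝ, 0 < r → ¬ BddBelow ((fun x => fderiv ℝ h x (f x)) '' {x | h x = r})) ∧
    ¬ ∃ α : ℝ → ℝ, Continuous α ∧ StrictMono α ∧ α 0 = 0 ∧
      ∀ x, 0 ≤ h x → fderiv ℝ h x (f x) ≥ -α (h x) := by
  intro f h
  have hLie : ∀ x, fderiv ℝ h x (f x) = x.1 * h x + 1 := fun x => by
    simp only [f, h, fderiv_snd_sub_fst_sq_apply]
    ring
  have hUnbdd : ∀ r : ℝ, 0 < r → ¬ BddBelow ((fun x => fderiv ℝ h x (f x)) '' {x | h x = r}) :=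
    fun r hr => by simpa only [hLie] using not_bddBelow_image_levelSet_snd_sub_fst_sq hr.ne'
  refine ⟨hLie, fun x hx => by rw [hLie, hx, mul_zero, zero_add], ?_, hUnbdd, ?_⟩
  · intro x hx h0 t ht
    have hx_cont : Continuous x := continuous_iff_continuousAt.2 fun t => (hx t).continuousAt
    have hhx : ∀ t, HasDerivAt (fun t => h (x t)) ((x t).1 * h (x t) + 1) t := fun t => by
      rw [← hLie]
      exact (hasFDerivAt_snd_sub_fst_sq (x t)).differentiableAt.hasFDerivAt.comp_hasDerivAt t (hx t)
    exact nonneg_of_hasDerivAt_eq_mul_add hx_cont.fst (fun _ => zero_le_one) hhx h0 ht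
  · rintro ⟨α, -, -, -, hα⟩
    refine hUnbdd 1 one_pos ⟨-α 1, ?_⟩
    rintro _ ⟨x, hx, rfl⟩
    have := hα x (hx.symm ▸ zero_le_one)
    rwa [hx] at this
end

section
/- (Lane keeping safe-set invariance, Proposition 5 essence) Let a_max > 0, y_max > 0 and define, on trajectories t ↦ y(t) that are C¹ with y and ẏ continuous, the safe set S = {(y, ẏ) : y_max − sgn(ẏ)·y − ẏ²/(2 a_max) > 0 and |y| ≤ y_max}. If a trajectory remains in {(y,ẏ) : y_max − sgn(ẏ)·y − ẏ²/(2a_max) > 0} for all t and starts with |y(t₀)| ≤ y_max, then |y(t)| ≤ y_max for all t ≥ t₀. -/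
/-- Auxiliary invariance lemma: if `y t₀ ≤ M` and whenever `y u ≥ M` (for `u ≥ t₀`)
the derivative is nonpositive, then `y t ≤ M` for all `t ≥ t₀`. -/
lemma aux_invariance (t₀ M : ℝ) (y : ℝ → ℝ) (hdiff : Differentiable ℝ y)
    (hkey : ∀ u, t₀ ≤ u → M ≤ y u → deriv y u ≤ 0)
    (hinit : y t₀ ≤ M) : ∀ t, t₀ ≤ t → y t ≤ M := by
  intro t ht
  by_contra hgt
  push_neg at hgt
  set K : Set ℝ := {u ∈ Set.Icc t₀ t | y u ≤ M} with hK
  have hKne : K.Nonempty := ⟨t₀, ⟨le_refl _, ht⟩, hinit⟩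
  have hKclosed : IsClosed K :=
    IsClosed.inter isClosed_Icc (isClosed_le hdiff.continuous continuous_const)
  have hKcpt : IsCompact K :=
    (isCompact_Icc : IsCompact (Set.Icc t₀ t)).of_isClosed_subset hKclosed
      (fun u hu => hu.1)
  obtain ⟨s, hsK, hsmax⟩ := hKcpt.exists_isGreatest hKne
  obtain ⟨⟨hst₀, hst⟩, hys⟩ := hsK
  have hslt : s < t := lt_of_le_of_ne hst (by rintro rfl; exact absurd hys (not_le.mpr hgt))
  -- on (s, t], y > M
  have hopen : ∀ u, s < u → u ≤ t → M < y u := by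
    intro u hsu hut
    by_contra hle
    push_neg at hle
    exact absurd (hsmax ⟨⟨le_trans hst₀ hsu.le, hut⟩, hle⟩) (not_le.mpr hsu)
  -- y is antitone on [s, t]
  have hanti : AntitoneOn y (Set.Icc s t) := by
    apply antitoneOn_of_deriv_nonpos (convex_Icc s t) hdiff.continuous.continuousOn
      (fun u _ => (hdiff u).differentiableWithinAt)
    intro u hu
    rw [interior_Icc] at hu
    exact hkey u (le_trans hst₀ hu.1.le) (hopen u hu.1 hu.2.le).le
  have := hanti (Set.left_mem_Icc.mpr hslt.le) (Set.right_mem_Icc.mpr hslt.le) hslt.le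
  linarith
/-- Lane keeping safe-set invariance: if the trajectory stays in
{y_max − sgn(ẏ)y − ẏ²/(2a_max) > 0} and starts with |y(t₀)| ≤ y_max,
then |y(t)| ≤ y_max for all t ≥ t₀. -/
theorem stmt17 (a_max y_max t₀ : ℝ) (ha : 0 < a_max) (hy : 0 < y_max)
    (y : ℝ → ℝ) (hdiff : Differentiable ℝ y) (hcont : Continuous (deriv y))
    (hsafe : ∀ t, t₀ ≤ t →
      0 < y_max - Real.sign (deriv y t) * y t - (deriv y t) ^ 2 / (2 * a_max))
    (hinit : |y t₀| ≤ y_max) :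
    ∀ t, t₀ ≤ t → |y t| ≤ y_max := by
  rw [abs_le] at hinit
  intro t ht
  rw [abs_le]
  constructor
  · -- lower bound via -y
    have hneg : ∀ u, t₀ ≤ u → y_max ≤ (-y) u → deriv (-y) u ≤ 0 := by
      intro u hu hmu
      have hd : deriv (-y) u = -deriv y u := deriv.neg
      rw [hd, neg_nonpos]
      by_contra hpos
      push_neg at hpos
      have hsgn : Real.sign (deriv y u) = -1 := Real.sign_of_neg hpos
      have := hsafe u hu
      rw [hsgn] at this
      have hyu : y u ≤ -y_max := by simp only [Pi.neg_apply] at hmu; linarith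
      have hsq : 0 < (deriv y u) ^ 2 / (2 * a_max) :=
        div_pos (by nlinarith) (by linarith)
      nlinarith
    have := aux_invariance t₀ y_max (-y) hdiff.neg hneg (by simp only [Pi.neg_apply]; linarith [hinit.1]) t ht
    simpa [neg_le] using this
  · have hpos : ∀ u, t₀ ≤ u → y_max ≤ y u → deriv y u ≤ 0 := by
      intro u hu hmu
      by_contra hpos
      push_neg at hpos
      have hsgn : Real.sign (deriv y u) = 1 := Real.sign_of_pos hpos
      have := hsafe u hu
      rw [hsgn] at this
      have hsq : 0 < (deriv y u) ^ 2 / (2 * a_max) :=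
        div_pos (by positivity) (by linarith)
      nlinarith
    exact aux_invariance t₀ y_max y hdiff hpos hinit.2 t ht
end
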